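/- arXiv:2409.16423 — 2 statements merged into one kernel-verified Lean document; each statement's English description precedes it below -/
import Mathlib

section
/- Let q ≥ 1 and p > p' ≥ 0 be integers. Then for every vector x ∈ ℝ³ with all entries positive, the first entry of the vector M1^p · M3^{p'} · M2^q · x is strictly greater than its third entry. -/
open Matrix

noncomputable section

/-- `M1 = [[1,1,0],[0,1,0],[0,0,1]]`. -/
def M1 : Matrix (Fin 3) (Fin 3) ℝ := !![1, 1, 0; 0, 1, 0; 0, 0, 1]

/-- `M2 = [[1,0,0],[1,1,1],[0,0,1]]`. -/
def M2 : Matrix (Fin 3) (Fin 3) ℝ := !![1, 0, 0; 1, 1, 1; 0, 0, 1]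

/-- `M3 = [[1,0,0],[0,1,0],[0,1,1]]`. -/
def M3 : Matrix (Fin 3) (Fin 3) ℝ := !![1, 0, 0; 0, 1, 0; 0, 1, 1]

/- A tuple `p = (p_n, p_n', q_n, …, p_1, p_1', q_1) ∈ ℕ₀^{3n}` is encoded by three
functions `P P' Q : Fin n → ℕ`, where the index `i : Fin n` corresponds to the
subscript `i + 1` (so `P ⟨0,_⟩ = p_1`, …, `P ⟨n-1,_⟩ = p_n`). -/

/-- The transition matrix `M_p = M1^{p_n} M3^{p_n'} M2^{q_n} ⋯ M1^{p_1} M3^{p_1'} M2^{q_1}`. -/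
def Mp (n : ℕ) (P P' Q : Fin n → ℕ) : Matrix (Fin 3) (Fin 3) ℝ :=
  ((List.finRange n).map fun i => M1 ^ P i.rev * M3 ^ P' i.rev * M2 ^ Q i.rev).prod

/-- Membership of the tuple `p` in `I_n`. -/
def memI (n : ℕ) (P P' Q : Fin n → ℕ) : Prop :=
  (∀ i, 0 < Q i) ∧ (∀ i, 0 < P i + P' i) ∧ (∃ j, 0 < P j) ∧ (∃ k, 0 < P' k)

/-- Finite continued fraction: `cf [a₁, …, a_m] x = 1/(a₁ + 1/(a₂ + ⋯ + 1/(a_m + x)))`. -/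
def cf (l : List ℕ) (x : ℝ) : ℝ := l.foldr (fun a y => 1 / (a + y)) x

/-- The (0-indexed) block index `k(j+1) - 1 = n - 1 - (j mod n)` used at step `j + 1`. -/
def blk (n : ℕ) (hn : 0 < n) (j : ℕ) : Fin n :=
  ⟨n - 1 - j % n, lt_of_le_of_lt (Nat.sub_le _ _) (Nat.sub_lt hn one_pos)⟩

/-- The sequence `(a₁, …, a_{2n}) = (p_n + p_n', q_n, …, p_1 + p_1', q_1)` as a list. -/
def aList (n : ℕ) (hn : 0 < n) (P P' Q : Fin n → ℕ) : List ℕ :=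
  (List.range n).flatMap fun i => [P (blk n hn i) + P' (blk n hn i), Q (blk n hn i)]

/-- `isH0 n hn P P' Q h0` says that `h0` is the number `h_{p,0}`: a real number in `(0,1)`
that is a fixed point of `x ↦ 1/(a₁ + 1/(a₂ + ⋯ + 1/(a_{2n} + x)))` (there is exactly one). -/
def isH0 (n : ℕ) (hn : 0 < n) (P P' Q : Fin n → ℕ) (h0 : ℝ) : Prop :=
  h0 ∈ Set.Ioo (0 : ℝ) 1 ∧ cf (aList n hn P P' Q) h0 = h0

/-- The pair `(w_{p,j}, h_{p,j})`, with `w_{p,0} = 1`, `h_{p,0} = h0`, and for `j ≥ 1`: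
`w_{p,j} = w_{p,j-1} − (p_{k(j)} + p'_{k(j)}) h_{p,j-1}`, `h_{p,j} = h_{p,j-1} − q_{k(j)} w_{p,j}`. -/
def wh (n : ℕ) (hn : 0 < n) (P P' Q : Fin n → ℕ) (h0 : ℝ) : ℕ → ℝ × ℝ
  | 0 => (1, h0)
  | j + 1 =>
    let prev := wh n hn P P' Q h0 j
    let b := blk n hn j
    let w := prev.1 - ((P b : ℝ) + (P' b : ℝ)) * prev.2
    (w, prev.2 - (Q b : ℝ) * w)

/-- The width `w_{p,j}`. -/
def wseq (n : ℕ) (hn : 0 < n) (P P' Q : Fin n → ℕ) (h0 : ℝ) (j : ℕ) : ℝ :=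
  (wh n hn P P' Q h0 j).1

/-- The height `h_{p,j}`. -/
def hseq (n : ℕ) (hn : 0 < n) (P P' Q : Fin n → ℕ) (h0 : ℝ) (j : ℕ) : ℝ :=
  (wh n hn P P' Q h0 j).2

/-- The split ratio `s_p = Σ_{i=0}^∞ p_{k(i+1)} h_{p,i}`. -/
def splitRatio (n : ℕ) (hn : 0 < n) (P P' Q : Fin n → ℕ) (h0 : ℝ) : ℝ :=
  ∑' i : ℕ, (P (blk n hn i) : ℝ) * hseq n hn P P' Q h0 i

/-- The reindexing realizing the shift `T`: the tuple `T(p)` is given by the functions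
`P ∘ shiftIdx n hn`, `P' ∘ shiftIdx n hn`, `Q ∘ shiftIdx n hn`. -/
def shiftIdx (n : ℕ) (hn : 0 < n) (i : Fin n) : Fin n :=
  ⟨(i.val + (n - 1)) % n, Nat.mod_lt _ hn⟩

lemma pow1 (p : ℕ) : M1 ^ p = !![1, (p:ℝ), 0; 0, 1, 0; 0, 0, 1] := by
  induction p with
  | zero => simp [Matrix.one_fin_three]
  | succ n ih =>
    rw [pow_succ, ih, M1]
    push_cast
    ext i j; fin_cases i <;> fin_cases j <;> simp [Matrix.mul_apply, Fin.sum_univ_three, Matrix.vecHead, Matrix.vecTail] <;> ring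

lemma pow2 (q : ℕ) : M2 ^ q = !![1, 0, 0; (q:ℝ), 1, (q:ℝ); 0, 0, 1] := by
  induction q with
  | zero => simp [Matrix.one_fin_three]
  | succ n ih =>
    rw [pow_succ, ih, M2]
    push_cast
    ext i j; fin_cases i <;> fin_cases j <;> simp [Matrix.mul_apply, Fin.sum_univ_three, Matrix.vecHead, Matrix.vecTail] <;> ring

lemma pow3 (p : ℕ) : M3 ^ p = !![1, 0, 0; 0, 1, 0; 0, (p:ℝ), 1] := by
  induction p with
  | zero => simp [Matrix.one_fin_three]
  | succ n ih =>
    rw [pow_succ, ih, M3]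
    push_cast
    ext i j; fin_cases i <;> fin_cases j <;> simp [Matrix.mul_apply, Fin.sum_univ_three, Matrix.vecHead, Matrix.vecTail] <;> ring

/-- for `q ≥ 1` and `p > p' ≥ 0`, for every positive vector `x`, the first
entry of `M1^p · M3^{p'} · M2^q · x` is strictly greater than its third entry. -/
theorem stmt15 (p p' q : ℕ) (hq : 1 ≤ q) (hpp' : p' < p) (x : Fin 3 → ℝ)
    (hx : ∀ i, 0 < x i) :
    ((M1 ^ p * M3 ^ p' * M2 ^ q) *ᵥ x) 2 < ((M1 ^ p * M3 ^ p' * M2 ^ q) *ᵥ x) 0 := by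
  rw [pow1, pow2, pow3]
  have h0 := hx 0; have h1 := hx 1; have h2 := hx 2
  have hq' : (1:ℝ) ≤ q := by exact_mod_cast hq
  have hpp : (p':ℝ) + 1 ≤ p := by exact_mod_cast hpp'
  simp [Matrix.mulVec, Matrix.mul_apply, dotProduct, Fin.sum_univ_three]
  have hd : (1:ℝ) ≤ ((p:ℝ) - p') := by linarith
  have hdq : (1:ℝ) ≤ ((p:ℝ) - p') * q := by nlinarith
  nlinarith [mul_nonneg (by linarith : (0:ℝ) ≤ ((p:ℝ) - p') * q - 1) h2.le,
    mul_pos (show (0:ℝ) < (p:ℝ)-p' by linarith) h1]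
end
end

section
/- Let n ≥ 1 and let p = (p_n, p_n', q_n, …, p_1, p_1', q_1) ∈ I_n and t = (t_n, t_n', u_n, …, t_1, t_1', u_1) ∈ I_n satisfy p_i + p_i' = t_i + t_i' and q_i = u_i for all i ∈ {1,…,n}. Then s_p = s_t if and only if p = t, and s_p + s_t = 1 if and only if t = f(p). -/
open Matrix

noncomputable section

/-!
Write `a_j = p + p'` and `q_j` for the entries of the block used at step `j + 1`. The heights and
widths satisfy `h_j = w_j τ_{2j}` and `w_{j+1} = h_j τ_{2j+1}`, where the `τ_k > 0` are the tails of
the periodic continued fraction `[a_0, q_0, a_1, q_1, …]` whose value is `h_{p,0}`. Hence all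
`w_j, h_j` are positive, `w_{j+1} < h_j` and `w_j ≤ 2⁻ʲ`, and telescoping `w_{j+1} = w_j - a_j h_j`
gives `∑_{j ≥ m} a_j h_j = w_m`; in particular `s_p + s_{f(p)} = 1`. Because `h_m > w_{m+1}`, a sum
`∑ b_j h_j` with digits `b_j ≤ a_j` determines its digits, as in a positional number system.
Finally `t` has the same `a_j` and `q_j` as `p`, hence the same `h_0` (the fixed point is unique)
and the same heights, so `s_t = ∑ t_{k(j+1)} h_{p,j}` and both claims follow by comparing digits.
-/

open Filter Topology

theorem List.getD_flatMap_range_pair {α : Type*} (u v : ℕ → α) (d : α) {n k : ℕ} (hk : k < n) :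
    ((List.range n).flatMap fun i => [u i, v i]).getD (2 * k) d = u k ∧
      ((List.range n).flatMap fun i => [u i, v i]).getD (2 * k + 1) d = v k := by
  induction n with
  | zero => omega
  | succ n ih =>
    have hlen : ((List.range n).flatMap fun i => [u i, v i]).length = 2 * n := by
      simp [List.length_flatMap]; ring
    rw [List.range_succ, List.flatMap_append]
    rcases Nat.lt_succ_iff_lt_or_eq.1 hk with hk | rfl
    · rw [List.getD_append _ _ _ _ (by omega), List.getD_append _ _ _ _ (by omega)]
      exact ih hk
    · simp [hlen]

section ContinuedFraction

variable {l : List ℕ} {x y : ℝ}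

theorem cf_cons (a : ℕ) (l : List ℕ) (x : ℝ) : cf (a :: l) x = 1 / (a + cf l x) := rfl

theorem cf_pos (l : List ℕ) (hx : 0 < x) : 0 < cf l x := by
  induction l with
  | nil => exact hx
  | cons a l ih => rw [cf_cons]; positivity

theorem abs_one_div_add_sub_lt {a u v r : ℝ} (ha : 1 ≤ a) (hu : 0 < u) (hv : 0 < v) (hr : 0 < r)
    (huv : |u - v| ≤ r) : |1 / (a + u) - 1 / (a + v)| < r := by
  have hD : 1 < (a + u) * (a + v) := by nlinarith
  have key : 1 / (a + u) - 1 / (a + v) = (v - u) / ((a + u) * (a + v)) := by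
    field_simp; ring
  rw [key, abs_div, abs_of_pos (show 0 < (a + u) * (a + v) by linarith), div_lt_iff₀ (by linarith),
    abs_sub_comm]
  nlinarith [abs_nonneg (u - v)]

theorem abs_cf_sub_le (hl : ∀ a ∈ l, 1 ≤ a) (hx : 0 < x) (hy : 0 < y) :
    |cf l x - cf l y| ≤ |x - y| := by
  induction l with
  | nil => exact le_rfl
  | cons a l ih =>
    rcases eq_or_ne x y with rfl | hxy
    · simp
    have ha : (1 : ℝ) ≤ a := by exact_mod_cast hl a List.mem_cons_self
    exact (abs_one_div_add_sub_lt ha (cf_pos l hx) (cf_pos l hy) (abs_sub_pos.2 hxy)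
      (ih fun b hb => hl b (List.mem_cons_of_mem a hb))).le

theorem eq_of_cf_eq_self (hne : l ≠ []) (hl : ∀ a ∈ l, 1 ≤ a) (hx : 0 < x) (hy : 0 < y)
    (hfx : cf l x = x) (hfy : cf l y = y) : x = y := by
  obtain ⟨a, l, rfl⟩ := List.exists_cons_of_ne_nil hne
  by_contra hxy
  have ha : (1 : ℝ) ≤ a := by exact_mod_cast hl a List.mem_cons_self
  have := abs_one_div_add_sub_lt ha (cf_pos l hx) (cf_pos l hy) (abs_sub_pos.2 hxy)
    (abs_cf_sub_le (fun b hb => hl b (List.mem_cons_of_mem a hb)) hx hy)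
  rw [← cf_cons, ← cf_cons, hfx, hfy] at this
  exact lt_irrefl _ this

/-- When `cf l x = x`, this is the value of the purely periodic continued fraction with period `l`,
started at its `k`-th partial quotient. -/
def cfTail (l : List ℕ) (x : ℝ) (k : ℕ) : ℝ := cf (l.drop (k % l.length)) x

theorem cfTail_pos (l : List ℕ) (hx : 0 < x) (k : ℕ) : 0 < cfTail l x k := cf_pos _ hx

theorem cfTail_zero (l : List ℕ) (x : ℝ) : cfTail l x 0 = cf l x := by
  simp [cfTail]

theorem cfTail_eq (hne : l ≠ []) (hfix : cf l x = x) (k : ℕ) :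
    cfTail l x k = 1 / (l.getD (k % l.length) 0 + cfTail l x (k + 1)) := by
  have hlen : 0 < l.length := List.length_pos_iff.2 hne
  have hk : k % l.length < l.length := Nat.mod_lt _ hlen
  have hnext : cf (l.drop (k % l.length + 1)) x = cfTail l x (k + 1) := by
    rw [cfTail, ← Nat.mod_add_mod]
    rcases (Nat.add_one_le_of_lt hk).lt_or_eq with hlt | heq
    · rw [Nat.mod_eq_of_lt hlt]
    · rw [heq, Nat.mod_self, List.drop_length, List.drop_zero]
      exact hfix.symm
  rw [cfTail, List.drop_eq_getElem_cons hk, cf_cons, hnext, List.getD_eq_getElem _ _ hk]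

end ContinuedFraction

section SplitSequences

variable {n : ℕ} {hn : 0 < n} {P P' Q : Fin n → ℕ} {h0 : ℝ}

theorem blk_mod (j : ℕ) : blk n hn (j % n) = blk n hn j := by
  simp [blk]

theorem blk_sub_one_sub (i : Fin n) : blk n hn (n - 1 - i) = i := by
  ext
  simp only [blk]
  rw [Nat.mod_eq_of_lt (by omega)]
  omega

theorem aList_length : (aList n hn P P' Q).length = 2 * n := by
  simp [aList, List.length_flatMap]; ring

theorem aList_ne_nil : aList n hn P P' Q ≠ [] :=
  List.ne_nil_of_length_pos (by rw [aList_length]; omega)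

theorem one_le_of_mem_aList (hA : ∀ i, 0 < P i + P' i) (hQ : ∀ i, 0 < Q i) :
    ∀ a ∈ aList n hn P P' Q, 1 ≤ a := by
  simp only [aList, List.mem_flatMap, List.mem_cons, List.not_mem_nil, or_false]
  rintro a ⟨i, -, rfl | rfl⟩
  exacts [hA _, hQ _]

theorem aList_congr {R R' U : Fin n → ℕ} (hsum : ∀ i, P i + P' i = R i + R' i)
    (hq : ∀ i, Q i = U i) : aList n hn R R' U = aList n hn P P' Q := by
  simp only [aList, hsum, hq]

theorem aList_getD_even (j : ℕ) :
    (aList n hn P P' Q).getD (2 * j % (2 * n)) 0 = P (blk n hn j) + P' (blk n hn j) := by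
  rw [Nat.mul_mod_mul_left, aList, (List.getD_flatMap_range_pair _ _ 0 (Nat.mod_lt j hn)).1,
    blk_mod]

theorem aList_getD_odd (j : ℕ) :
    (aList n hn P P' Q).getD ((2 * j + 1) % (2 * n)) 0 = Q (blk n hn j) := by
  have hmod : (2 * j + 1) % (2 * n) = 2 * (j % n) + 1 := by
    conv_lhs => rw [← Nat.div_add_mod j n]
    rw [show 2 * (n * (j / n) + j % n) + 1 = 2 * (j % n) + 1 + 2 * n * (j / n) by ring,
      Nat.add_mul_mod_self_left, Nat.mod_eq_of_lt (by have := Nat.mod_lt j hn; omega)]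
  rw [hmod, aList, (List.getD_flatMap_range_pair _ _ 0 (Nat.mod_lt j hn)).2, blk_mod]

theorem cfTail_aList_even (hfix : cf (aList n hn P P' Q) h0 = h0) (j : ℕ) :
    cfTail (aList n hn P P' Q) h0 (2 * j) =
      1 / ((P (blk n hn j) : ℝ) + P' (blk n hn j) + cfTail (aList n hn P P' Q) h0 (2 * j + 1)) := by
  rw [cfTail_eq aList_ne_nil hfix, aList_length, aList_getD_even, Nat.cast_add]

theorem cfTail_aList_odd (hfix : cf (aList n hn P P' Q) h0 = h0) (j : ℕ) :
    cfTail (aList n hn P P' Q) h0 (2 * j + 1) =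
      1 / ((Q (blk n hn j) : ℝ) + cfTail (aList n hn P P' Q) h0 (2 * j + 2)) := by
  rw [cfTail_eq aList_ne_nil hfix, aList_length, aList_getD_odd]

theorem wseq_zero : wseq n hn P P' Q h0 0 = 1 := rfl

theorem hseq_zero : hseq n hn P P' Q h0 0 = h0 := rfl

theorem wseq_succ (j : ℕ) : wseq n hn P P' Q h0 (j + 1) =
    wseq n hn P P' Q h0 j - ((P (blk n hn j) : ℝ) + P' (blk n hn j)) * hseq n hn P P' Q h0 j :=
  rfl

theorem hseq_succ (j : ℕ) : hseq n hn P P' Q h0 (j + 1) =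
    hseq n hn P P' Q h0 j - Q (blk n hn j) * wseq n hn P P' Q h0 (j + 1) :=
  rfl

local notation "τ" => cfTail (aList n hn P P' Q) h0

theorem cfTail_aList_pos (hh0 : isH0 n hn P P' Q h0) (k : ℕ) : 0 < τ k :=
  cfTail_pos _ hh0.1.1 k

theorem wseq_succ_eq_hseq_mul_of_hseq_eq (hh0 : isH0 n hn P P' Q h0) {j : ℕ}
    (hj : hseq n hn P P' Q h0 j = wseq n hn P P' Q h0 j * τ (2 * j)) :
    wseq n hn P P' Q h0 (j + 1) = hseq n hn P P' Q h0 j * τ (2 * j + 1) := by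
  have := cfTail_aList_pos hh0 (2 * j + 1)
  rw [wseq_succ, hj, cfTail_aList_even hh0.2]
  field_simp
  ring

theorem hseq_eq_wseq_mul (hh0 : isH0 n hn P P' Q h0) (j : ℕ) :
    hseq n hn P P' Q h0 j = wseq n hn P P' Q h0 j * τ (2 * j) := by
  induction j with
  | zero => rw [hseq_zero, wseq_zero, one_mul, Nat.mul_zero, cfTail_zero, hh0.2]
  | succ j ih =>
    have := cfTail_aList_pos hh0 (2 * j + 2)
    have hodd := cfTail_aList_odd hh0.2 j
    rw [hseq_succ, wseq_succ_eq_hseq_mul_of_hseq_eq hh0 ih, mul_add_one, hodd]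
    field_simp
    ring

theorem wseq_succ_eq_hseq_mul (hh0 : isH0 n hn P P' Q h0) (j : ℕ) :
    wseq n hn P P' Q h0 (j + 1) = hseq n hn P P' Q h0 j * τ (2 * j + 1) :=
  wseq_succ_eq_hseq_mul_of_hseq_eq hh0 (hseq_eq_wseq_mul hh0 j)

theorem wseq_pos (hh0 : isH0 n hn P P' Q h0) (j : ℕ) : 0 < wseq n hn P P' Q h0 j := by
  induction j with
  | zero => exact one_pos
  | succ j ih =>
    rw [wseq_succ_eq_hseq_mul hh0, hseq_eq_wseq_mul hh0]
    have := cfTail_aList_pos hh0 (2 * j)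
    have := cfTail_aList_pos hh0 (2 * j + 1)
    positivity

theorem hseq_pos (hh0 : isH0 n hn P P' Q h0) (j : ℕ) : 0 < hseq n hn P P' Q h0 j := by
  rw [hseq_eq_wseq_mul hh0]
  exact mul_pos (wseq_pos hh0 j) (cfTail_aList_pos hh0 _)

theorem cfTail_aList_odd_lt_one (hQ : ∀ i, 0 < Q i) (hh0 : isH0 n hn P P' Q h0) (j : ℕ) :
    τ (2 * j + 1) < 1 := by
  have hq : (1 : ℝ) ≤ Q (blk n hn j) := by exact_mod_cast hQ _
  rw [cfTail_aList_odd hh0.2, div_lt_one (by linarith [cfTail_aList_pos hh0 (2 * j + 2)])]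
  linarith [cfTail_aList_pos hh0 (2 * j + 2)]

theorem wseq_succ_lt_hseq (hQ : ∀ i, 0 < Q i) (hh0 : isH0 n hn P P' Q h0) (j : ℕ) :
    wseq n hn P P' Q h0 (j + 1) < hseq n hn P P' Q h0 j := by
  rw [wseq_succ_eq_hseq_mul hh0]
  exact mul_lt_of_lt_one_right (hseq_pos hh0 j) (cfTail_aList_odd_lt_one hQ hh0 j)

theorem wseq_succ_le_half (hA : ∀ i, 0 < P i + P' i) (hQ : ∀ i, 0 < Q i)
    (hh0 : isH0 n hn P P' Q h0) (j : ℕ) :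
    wseq n hn P P' Q h0 (j + 1) ≤ wseq n hn P P' Q h0 j / 2 := by
  have ha : (1 : ℝ) ≤ P (blk n hn j) + P' (blk n hn j) := by exact_mod_cast hA _
  have hs := cfTail_aList_pos hh0 (2 * j + 1)
  have hs1 := cfTail_aList_odd_lt_one hQ hh0 j
  have hw := wseq_pos hh0 j
  rw [wseq_succ_eq_hseq_mul hh0, hseq_eq_wseq_mul hh0, cfTail_aList_even hh0.2]
  set s := τ (2 * j + 1)
  set a : ℝ := P (blk n hn j) + P' (blk n hn j)
  have hhalf : 1 / (a + s) * s ≤ 1 / 2 := by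
    rw [one_div_mul_eq_div, div_le_iff₀ (by linarith)]
    linarith
  calc wseq n hn P P' Q h0 j * (1 / (a + s)) * s
      = wseq n hn P P' Q h0 j * (1 / (a + s) * s) := mul_assoc _ _ _
    _ ≤ wseq n hn P P' Q h0 j * (1 / 2) := by gcongr
    _ = wseq n hn P P' Q h0 j / 2 := by ring

theorem tendsto_wseq_atTop (hA : ∀ i, 0 < P i + P' i) (hQ : ∀ i, 0 < Q i)
    (hh0 : isH0 n hn P P' Q h0) : Tendsto (wseq n hn P P' Q h0) atTop (𝓝 0) := by
  have hle : ∀ j, wseq n hn P P' Q h0 j ≤ (1 / 2) ^ j := by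
    intro j
    induction j with
    | zero => exact le_of_eq wseq_zero
    | succ j ih =>
      rw [pow_succ]
      linarith [wseq_succ_le_half hA hQ hh0 j]
  exact squeeze_zero (fun j => (wseq_pos hh0 j).le) hle
    (tendsto_pow_atTop_nhds_zero_of_lt_one (by norm_num) (by norm_num))

theorem hasSum_hseq_from (hA : ∀ i, 0 < P i + P' i) (hQ : ∀ i, 0 < Q i)
    (hh0 : isH0 n hn P P' Q h0) (M : ℕ) :
    HasSum (fun i => ((P (blk n hn (i + M)) : ℝ) + P' (blk n hn (i + M))) *
      hseq n hn P P' Q h0 (i + M)) (wseq n hn P P' Q h0 M) := by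
  have hpartial : ∀ N, ∑ i ∈ Finset.range N,
      ((P (blk n hn (i + M)) : ℝ) + P' (blk n hn (i + M))) * hseq n hn P P' Q h0 (i + M) =
        wseq n hn P P' Q h0 M - wseq n hn P P' Q h0 (N + M) := by
    intro N
    induction N with
    | zero => simp
    | succ N ih => rw [Finset.sum_range_succ, ih, Nat.add_right_comm, wseq_succ]; ring
  rw [hasSum_iff_tendsto_nat_of_nonneg (fun i => by have := hseq_pos hh0 (i + M); positivity)]
  simp_rw [hpartial]
  simpa using tendsto_const_nhds.sub
    ((tendsto_wseq_atTop hA hQ hh0).comp (tendsto_add_atTop_nat M))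

end SplitSequences

section DigitExpansion

variable {A h : ℕ → ℝ} {b c : ℕ → ℕ}

theorem summable_natCast_mul_of_le (hh : ∀ j, 0 ≤ h j) (hA : Summable fun j => A j * h j)
    (hb : ∀ j, (b j : ℝ) ≤ A j) : Summable fun j => (b j : ℝ) * h j :=
  hA.of_nonneg_of_le (fun j => mul_nonneg (Nat.cast_nonneg _) (hh j))
    fun j => mul_le_mul_of_nonneg_right (hb j) (hh j)

theorem tsum_natCast_mul_lt_of_lex (hh : ∀ j, 0 ≤ h j) (hA : Summable fun j => A j * h j)
    (hb : ∀ j, (b j : ℝ) ≤ A j) (hc : ∀ j, (c j : ℝ) ≤ A j) {m : ℕ}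
    (htail : ∑' j, A (j + (m + 1)) * h (j + (m + 1)) < h m)
    (heq : ∀ j < m, c j = b j) (hlt : c m < b m) :
    ∑' j, (c j : ℝ) * h j < ∑' j, (b j : ℝ) * h j := by
  have hbs := summable_natCast_mul_of_le hh hA hb
  have hcs := summable_natCast_mul_of_le hh hA hc
  set d := fun j => (b j : ℝ) * h j - c j * h j
  have hhead : h m ≤ ∑ j ∈ Finset.range (m + 1), d j := by
    rw [Finset.sum_range_succ, Finset.sum_eq_zero fun j hj => by
      simp [d, heq j (Finset.mem_range.1 hj)]]
    have : (c m : ℝ) + 1 ≤ b m := by exact_mod_cast hlt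
    nlinarith [hh m]
  have htl : -∑' j, A (j + (m + 1)) * h (j + (m + 1)) ≤ ∑' j, d (j + (m + 1)) := by
    rw [← tsum_neg]
    refine Summable.tsum_le_tsum (fun j => ?_) ((summable_nat_add_iff (m + 1)).2 hA).neg
      ((summable_nat_add_iff (m + 1)).2 (hbs.sub hcs))
    have := hh (j + (m + 1))
    nlinarith [hc (j + (m + 1)), (b (j + (m + 1))).cast_nonneg (α := ℝ)]
  have hsplit := (hbs.sub hcs).sum_add_tsum_nat_add (m + 1)
  rw [hbs.tsum_sub hcs] at hsplit
  linarith

theorem eq_of_tsum_natCast_mul_eq (hh : ∀ j, 0 ≤ h j) (hA : Summable fun j => A j * h j)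
    (hb : ∀ j, (b j : ℝ) ≤ A j) (hc : ∀ j, (c j : ℝ) ≤ A j)
    (htail : ∀ m, ∑' j, A (j + (m + 1)) * h (j + (m + 1)) < h m)
    (hbc : ∑' j, (b j : ℝ) * h j = ∑' j, (c j : ℝ) * h j) : b = c := by
  by_contra hne
  have hex : ∃ m, b m ≠ c m := Function.ne_iff.1 hne
  have hmin : ∀ j < Nat.find hex, b j = c j := fun j hj => not_not.1 (Nat.find_min hex hj)
  rcases (Nat.find_spec hex).lt_or_gt with hlt | hlt
  · exact (tsum_natCast_mul_lt_of_lex hh hA hc hb (htail _) hmin hlt).ne hbc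
  · exact (tsum_natCast_mul_lt_of_lex hh hA hb hc (htail _) (fun j hj => (hmin j hj).symm)
      hlt).ne hbc.symm

end DigitExpansion

section SplitRatio

variable {n : ℕ} {hn : 0 < n} {P P' Q : Fin n → ℕ} {h0 : ℝ}

theorem isH0_unique (hA : ∀ i, 0 < P i + P' i) (hQ : ∀ i, 0 < Q i) {x y : ℝ}
    (hx : isH0 n hn P P' Q x) (hy : isH0 n hn P P' Q y) : x = y :=
  eq_of_cf_eq_self aList_ne_nil (one_le_of_mem_aList hA hQ) hx.1.1 hy.1.1 hx.2 hy.2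

theorem isH0_congr {R R' U : Fin n → ℕ} (hsum : ∀ i, P i + P' i = R i + R' i)
    (hq : ∀ i, Q i = U i) : isH0 n hn R R' U h0 ↔ isH0 n hn P P' Q h0 := by
  rw [isH0, isH0, aList_congr hsum hq]

theorem hseq_congr {R R' U : Fin n → ℕ} (hsum : ∀ i, P i + P' i = R i + R' i)
    (hq : ∀ i, Q i = U i) : hseq n hn R R' U h0 = hseq n hn P P' Q h0 := by
  suffices ∀ j, wh n hn R R' U h0 j = wh n hn P P' Q h0 j from funext fun j => by
    rw [hseq, hseq, this]
  intro j
  induction j with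
  | zero => rfl
  | succ j ih =>
    have hc : (R (blk n hn j) : ℝ) + R' (blk n hn j) = P (blk n hn j) + P' (blk n hn j) := by
      exact_mod_cast (hsum _).symm
    simp only [wh, ih, hc, hq]

theorem splitRatio_congr {R R' U : Fin n → ℕ} (hsum : ∀ i, P i + P' i = R i + R' i)
    (hq : ∀ i, Q i = U i) :
    splitRatio n hn R R' U h0 = ∑' j, (R (blk n hn j) : ℝ) * hseq n hn P P' Q h0 j := by
  rw [splitRatio, hseq_congr hsum hq]

theorem splitRatio_add_tsum_eq_one (hA : ∀ i, 0 < P i + P' i) (hQ : ∀ i, 0 < Q i)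
    (hh0 : isH0 n hn P P' Q h0) :
    splitRatio n hn P P' Q h0 + ∑' j, (P' (blk n hn j) : ℝ) * hseq n hn P P' Q h0 j = 1 := by
  have htotal := hasSum_hseq_from hA hQ hh0 0
  rw [wseq_zero] at htotal
  simp only [add_zero] at htotal
  have hh j := (hseq_pos hh0 j).le
  have hP := summable_natCast_mul_of_le hh htotal.summable fun j =>
    le_add_of_nonneg_right (P' (blk n hn j)).cast_nonneg
  have hP' := summable_natCast_mul_of_le hh htotal.summable fun j =>
    le_add_of_nonneg_left (P (blk n hn j)).cast_nonneg
  rw [splitRatio, ← hP.tsum_add hP', ← htotal.tsum_eq]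
  simp only [add_mul]

theorem eq_of_tsum_blk_mul_hseq_eq (hA : ∀ i, 0 < P i + P' i) (hQ : ∀ i, 0 < Q i)
    (hh0 : isH0 n hn P P' Q h0) {B C : Fin n → ℕ} (hB : ∀ i, B i ≤ P i + P' i)
    (hC : ∀ i, C i ≤ P i + P' i)
    (hBC : ∑' j, (B (blk n hn j) : ℝ) * hseq n hn P P' Q h0 j =
      ∑' j, (C (blk n hn j) : ℝ) * hseq n hn P P' Q h0 j) : B = C := by
  have hbound : ∀ D : Fin n → ℕ, (∀ i, D i ≤ P i + P' i) →
      ∀ j, (D (blk n hn j) : ℝ) ≤ P (blk n hn j) + P' (blk n hn j) :=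
    fun D hD j => by exact_mod_cast hD _
  have hdigits := eq_of_tsum_natCast_mul_eq (fun j => (hseq_pos hh0 j).le)
    (by simpa using (hasSum_hseq_from hA hQ hh0 0).summable) (hbound B hB) (hbound C hC)
    (fun m => (hasSum_hseq_from hA hQ hh0 (m + 1)).tsum_eq ▸ wseq_succ_lt_hseq hQ hh0 m) hBC
  funext i
  simpa [blk_sub_one_sub] using congrFun hdigits (n - 1 - i)

end SplitRatio

theorem stmt18_general (n : ℕ) (hn : 0 < n) (P P' Q R R' U : Fin n → ℕ)
    (hP : memI n P P' Q)
    (hsum : ∀ i, P i + P' i = R i + R' i) (hq : ∀ i, Q i = U i)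
    (h0p h0t : ℝ) (hh0p : isH0 n hn P P' Q h0p) (hh0t : isH0 n hn R R' U h0t) :
    (splitRatio n hn P P' Q h0p = splitRatio n hn R R' U h0t
      ↔ (P = R ∧ P' = R' ∧ Q = U)) ∧
    (splitRatio n hn P P' Q h0p + splitRatio n hn R R' U h0t = 1
      ↔ (R = P' ∧ R' = P ∧ U = Q)) := by
  obtain ⟨hQ, hA, -, -⟩ := hP
  obtain rfl : h0t = h0p := isH0_unique hA hQ ((isH0_congr hsum hq).1 hh0t) hh0p
  have hR : ∀ i, R i ≤ P i + P' i := fun i => (hsum i).symm ▸ Nat.le_add_right _ _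
  have hflip := splitRatio_add_tsum_eq_one hA hQ hh0p
  rw [splitRatio_congr hsum hq]
  refine ⟨⟨fun h => ?_, ?_⟩, ⟨fun h => ?_, ?_⟩⟩
  · obtain rfl := eq_of_tsum_blk_mul_hseq_eq hA hQ hh0p (fun i => Nat.le_add_right _ _) hR h
    exact ⟨rfl, funext fun i => by have := hsum i; omega, funext hq⟩
  · rintro ⟨rfl, -, -⟩
    rfl
  · obtain rfl := eq_of_tsum_blk_mul_hseq_eq hA hQ hh0p hR (fun i => Nat.le_add_left _ _)
      (by linarith)
    exact ⟨rfl, funext fun i => by have := hsum i; omega, funext fun i => (hq i).symm⟩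
  · rintro ⟨rfl, -, -⟩
    exact hflip

/-- if `p, t ∈ I_n` satisfy `p_i + p_i' = t_i + t_i'` and `q_i = u_i` for
all `i`, then `s_p = s_t ↔ p = t`, and `s_p + s_t = 1 ↔ t = f(p)`. -/
theorem stmt18 (n : ℕ) (hn : 0 < n) (P P' Q R R' U : Fin n → ℕ)
    (hP : memI n P P' Q) (hT : memI n R R' U)
    (hsum : ∀ i, P i + P' i = R i + R' i) (hq : ∀ i, Q i = U i)
    (h0p h0t : ℝ) (hh0p : isH0 n hn P P' Q h0p) (hh0t : isH0 n hn R R' U h0t) :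
    (splitRatio n hn P P' Q h0p = splitRatio n hn R R' U h0t
      ↔ (P = R ∧ P' = R' ∧ Q = U)) ∧
    (splitRatio n hn P P' Q h0p + splitRatio n hn R R' U h0t = 1
      ↔ (R = P' ∧ R' = P ∧ U = Q)) :=
  stmt18_general n hn P P' Q R R' U hP hsum hq h0p h0t hh0p hh0t
end
end
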